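/- arXiv:2510.18788 — 5 statements merged into one kernel-verified Lean document; each statement's English description precedes it below -/
import Mathlib

section
/- For every ε > 0 there exists a set A ⊆ ℕ with upper Banach density greater than 1 − ε such that for every sequence (k_i) of natural numbers, every nested sequence B_1 ⊇ B_2 ⊇ ⋯ of infinite subsets of ℕ, and every sequence (t_i) of natural numbers, it is NOT the case that for all i, the set of all sums ∑_{n∈F} n over finite subsets F ⊆ B_i with k_i ≤ |F| ≤ k_i + i is contained in A − t_i. -/
open Filter
open scoped Classical BigOperators

/-- Upper Banach density `d*(A) = limsup_{L→∞} sup_M |A ∩ [M, M+L)| / L`. -/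
noncomputable def upperBanachDensity (A : Set ℕ) : ℝ :=
  Filter.limsup (fun L : ℕ =>
    ⨆ M : ℕ, (((Finset.Ico M (M + L)).filter (fun n => n ∈ A)).card : ℝ) / L)
    Filter.atTop

/-!
Take primes `p j ≥ m (j + 1) 2 ^ (j + 2)` and let `A` consist of the `x` whose residue modulo every
`p j ≤ x` exceeds `j`. The residues `≤ j` modulo `p j` have density `(j + 1) / p j ≤ 1 / (m 2 ^ (j + 1))`,
so already the initial intervals of `A` have density at least `1 - 1 / m`.

Given `k`, `B`, `t`, put `P = p (t 1)` and pick a residue `r` modulo `P` taken infinitely often on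
`B P`. If `r = 0`, then for `F ⊆ B P ⊆ B 1` the number `∑ F + t 1` is `≡ t 1 (mod P)`, so it is not
in `A`. If `r ≠ 0`, stage `P` allows `P` consecutive values of `|F|`, and as `P` is prime one of them
makes `∑ F + t P ≡ |F| r + t P ≡ 0 (mod P)`, again outside `A`.
-/

open Finset

lemma Set.Infinite.exists_infinite_mod_eq {S : Set ℕ} (hS : S.Infinite) {P : ℕ} (hP : 0 < P) :
    ∃ r < P, {b ∈ S | b % P = r}.Infinite := by
  by_contra! h
  refine hS ((Set.finite_lt_nat P).biUnion h |>.subset fun b hb => ?_)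
  exact Set.mem_biUnion (Nat.mod_lt b hP) ⟨hb, rfl⟩

lemma Set.Infinite.exists_finset_card_eq_sum_modEq {S : Set ℕ} (hS : S.Infinite) {P r : ℕ}
    (hSr : ∀ b ∈ S, b % P = r) {n : ℕ} (hn : n ≠ 0) (c : ℕ) :
    ∃ F : Finset ℕ, ↑F ⊆ S ∧ #F = n ∧ ∑ b ∈ F, b ≡ n * r [MOD P] ∧ c ≤ ∑ b ∈ F, b := by
  obtain ⟨F, hFS, hFn⟩ := (hS.sdiff (Set.finite_lt_nat c)).exists_subset_card_eq n
  refine ⟨F, hFS.trans Set.sdiff_subset, hFn, ?_, ?_⟩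
  · rw [Nat.ModEq, Finset.sum_nat_mod, Finset.sum_congr rfl fun b hb => hSr b (hFS hb).1,
      sum_const, smul_eq_mul, hFn]
  · obtain ⟨b, hb⟩ := Finset.card_ne_zero.mp (hFn ▸ hn)
    exact (not_lt.mp (hFS hb).2).trans (Finset.single_le_sum (fun i _ => Nat.zero_le i) hb)

lemma exists_lt_dvd_add_mul_add {P r : ℕ} (hP : P.Prime) (hr : ¬ P ∣ r) (s t : ℕ) :
    ∃ a < P, P ∣ (s + a) * r + t := by
  have := Fact.mk hP
  have hr' : (r : ZMod P) ≠ 0 := by rwa [Ne, ZMod.natCast_eq_zero_iff]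
  refine ⟨((-t - s * r) * (r : ZMod P)⁻¹ : ZMod P).val, ZMod.val_lt _, ?_⟩
  rw [← ZMod.natCast_eq_zero_iff]
  push_cast
  rw [ZMod.natCast_zmod_val]
  field_simp
  ring

lemma card_filter_mod_lt_le (L q c : ℕ) :
    #{x ∈ range L | x % q < c} ≤ (L / q + 1) * c := by
  calc #{x ∈ range L | x % q < c} ≤ #(range (L / q + 1) ×ˢ range c) := by
        refine card_le_card_of_injOn (fun x => (x / q, x % q)) (fun x hx => ?_) fun x _ y _ hxy => ?_
        · simp only [coe_filter, mem_range, Set.mem_ofPred_eq] at hx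
          simp only [coe_product, coe_range, Set.mem_prod, Set.mem_Iio]
          exact ⟨Nat.lt_succ_of_le (Nat.div_le_div_right hx.1.le), hx.2⟩
        · simp only [Prod.mk.injEq] at hxy
          rw [← Nat.div_add_mod x q, ← Nat.div_add_mod y q, hxy.1, hxy.2]
    _ = (L / q + 1) * c := by rw [card_product, card_range, card_range]

lemma card_filter_mod_lt_mul_le (L q c : ℕ) (hqL : q ≤ L) :
    #{x ∈ range L | x % q < c} * q ≤ 2 * L * c := by
  rcases q.eq_zero_or_pos with rfl | hq
  · simp
  have h1 : 1 ≤ L / q := (Nat.one_le_div_iff hq).mpr hqL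
  have h2 : L / q * q ≤ L := Nat.div_mul_le_self L q
  calc #{x ∈ range L | x % q < c} * q ≤ (L / q + 1) * c * q := by
        gcongr; exact card_filter_mod_lt_le L q c
    _ ≤ 2 * (L / q) * c * q := by gcongr; omega
    _ = 2 * (L / q * q) * c := by ring
    _ ≤ 2 * L * c := by gcongr

lemma le_upperBanachDensity {A : Set ℕ} {c : ℝ} (h : ∀ L, c * L ≤ #{x ∈ range L | x ∈ A}) :
    c ≤ upperBanachDensity A := by
  have hle_one : ∀ L M, (#{x ∈ Ico M (M + L) | x ∈ A} : ℝ) / L ≤ 1 := fun L M =>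
    div_le_one_of_le₀ (by exact_mod_cast (card_filter_le _ _).trans (by simp)) (Nat.cast_nonneg _)
  refine le_limsup_of_frequently_le (Eventually.frequently (eventually_atTop.2 ⟨1, fun L hL => ?_⟩))
    (isBoundedUnder_of ⟨1, fun L => ciSup_le (hle_one L)⟩)
  refine le_ciSup_of_le ⟨1, Set.forall_mem_range.2 (hle_one L)⟩ 0 ?_
  rw [le_div_iff₀ (by exact_mod_cast hL), zero_add, ← range_eq_Ico]
  exact h L

lemma lt_of_mul_two_pow_le {m j q : ℕ} (hm : 0 < m) (h : m * (j + 1) * 2 ^ (j + 2) ≤ q) :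
    j < q :=
  calc j < j + 1 := j.lt_add_one
    _ ≤ m * (j + 1) := Nat.le_mul_of_pos_left _ hm
    _ ≤ m * (j + 1) * 2 ^ (j + 2) := Nat.le_mul_of_pos_right _ (by positivity)
    _ ≤ q := h

def residueAvoidingSet (p : ℕ → ℕ) : Set ℕ := {x | ∀ j, p j ≤ x → j < x % p j}

section ResidueAvoidingSet

variable {p : ℕ → ℕ} {m : ℕ}

lemma card_filter_le_mod_le_mul_le (hp : ∀ j, m * (j + 1) * 2 ^ (j + 2) ≤ p j) (L j : ℕ) :
    #{x ∈ range L | p j ≤ x ∧ x % p j ≤ j} * (m * 2 ^ (j + 1)) ≤ L := by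
  by_cases hpL : p j ≤ L
  · have hsub : #{x ∈ range L | p j ≤ x ∧ x % p j ≤ j} ≤ #{x ∈ range L | x % p j < j + 1} :=
      card_le_card (monotone_filter_right _ fun _ _ hx => Nat.lt_succ_of_le hx.2)
    refine Nat.le_of_mul_le_mul_right ?_ (by positivity : 0 < 2 * (j + 1))
    calc #{x ∈ range L | p j ≤ x ∧ x % p j ≤ j} * (m * 2 ^ (j + 1)) * (2 * (j + 1))
        = #{x ∈ range L | p j ≤ x ∧ x % p j ≤ j} * (m * (j + 1) * 2 ^ (j + 2)) := by ring
      _ ≤ #{x ∈ range L | x % p j < j + 1} * p j := Nat.mul_le_mul hsub (hp j)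
      _ ≤ 2 * L * (j + 1) := card_filter_mod_lt_mul_le L (p j) (j + 1) hpL
      _ = L * (2 * (j + 1)) := by ring
  · rw [filter_false_of_mem fun x (hx : x ∈ range L) h => hpL (h.1.trans (mem_range.1 hx).le)]
    simp

lemma card_filter_notMem_residueAvoidingSet_le (hp : ∀ j, m * (j + 1) * 2 ^ (j + 2) ≤ p j)
    (hm : 0 < m) (L : ℕ) :
    (#{x ∈ range L | x ∉ residueAvoidingSet p} : ℝ) ≤ L / m := by
  have hsub : {x ∈ range L | x ∉ residueAvoidingSet p} ⊆
      (range L).biUnion fun j => {x ∈ range L | p j ≤ x ∧ x % p j ≤ j} := by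
    intro x hx
    simp only [residueAvoidingSet, mem_filter, Set.mem_ofPred_eq, not_forall, not_lt] at hx
    obtain ⟨hxL, j, hjx, hj⟩ := hx
    have hjL : j < L := (lt_of_mul_two_pow_le hm (hp j)).trans_le (hjx.trans (mem_range.1 hxL).le)
    exact mem_biUnion.2 ⟨j, mem_range.2 hjL, mem_filter.2 ⟨hxL, hjx, hj⟩⟩
  have hcount : ∀ j, (#{x ∈ range L | p j ≤ x ∧ x % p j ≤ j} : ℝ) ≤ L / m * (1 / 2) ^ (j + 1) := by
    intro j
    rw [div_mul_eq_mul_div, one_div_pow, mul_one_div, div_div, le_div_iff₀ (by positivity)]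
    exact_mod_cast mul_comm m (2 ^ (j + 1)) ▸ card_filter_le_mod_le_mul_le hp L j
  have hgeom : ∑ j ∈ range L, (1 / 2 : ℝ) ^ (j + 1) ≤ 1 := by
    simp only [pow_succ, ← sum_mul]
    linarith [sum_geometric_two_le L]
  calc (#{x ∈ range L | x ∉ residueAvoidingSet p} : ℝ)
      ≤ ∑ j ∈ range L, (#{x ∈ range L | p j ≤ x ∧ x % p j ≤ j} : ℝ) := by
        exact_mod_cast (card_le_card hsub).trans card_biUnion_le
    _ ≤ ∑ j ∈ range L, L / m * (1 / 2 : ℝ) ^ (j + 1) := sum_le_sum fun j _ => hcount j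
    _ ≤ L / m := by
        rw [← mul_sum]
        exact mul_le_of_le_one_right (by positivity) hgeom

lemma one_sub_one_div_le_upperBanachDensity_residueAvoidingSet
    (hp : ∀ j, m * (j + 1) * 2 ^ (j + 2) ≤ p j) (hm : 0 < m) :
    1 - 1 / (m : ℝ) ≤ upperBanachDensity (residueAvoidingSet p) := by
  refine le_upperBanachDensity fun L => ?_
  have hsplit := card_filter_add_card_filter_not (s := range L) (p := (· ∈ residueAvoidingSet p))
  rw [card_range] at hsplit
  have hbad := card_filter_notMem_residueAvoidingSet_le hp hm L
  have hL : ((L : ℕ) : ℝ) = #{x ∈ range L | x ∈ residueAvoidingSet p} +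
      #{x ∈ range L | x ∉ residueAvoidingSet p} := by exact_mod_cast hsplit.symm
  rw [sub_mul, one_mul, one_div_mul_eq_div]
  linarith

lemma not_forall_sum_add_mem_residueAvoidingSet (hp : ∀ j, (p j).Prime)
    (hjp : ∀ j, j < p j) {B : ℕ → Set ℕ} (hB : Antitone B) (hBinf : ∀ i, (B i).Infinite)
    (k t : ℕ → ℕ) :
    ¬ ∀ i : ℕ, 1 ≤ i → ∀ F : Finset ℕ, ↑F ⊆ B i → k i ≤ #F → #F ≤ k i + i →
      (∑ n ∈ F, n) + t i ∈ residueAvoidingSet p := by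
  intro H
  set P := p (t 1)
  have hP : 0 < P := (hp _).pos
  obtain ⟨r, hrP, hr⟩ := (hBinf P).exists_infinite_mod_eq hP
  have hSr : ∀ b ∈ {b ∈ B P | b % P = r}, b % P = r := fun _ hb => hb.2
  rcases Nat.eq_zero_or_pos r with rfl | hr0
  · obtain ⟨F, hFS, hF, hFsum, hFP⟩ :=
      hr.exists_finset_card_eq_sum_modEq hSr (n := max (k 1) 1) (by positivity) P
    have hmod : ((∑ n ∈ F, n) + t 1) % P = t 1 := by
      have := hFsum.add_right (t 1)
      rw [mul_zero, zero_add] at this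
      exact Eq.trans this (Nat.mod_eq_of_lt (hjp (t 1)))
    have hmem := H 1 le_rfl F (hFS.trans ((Set.sep_subset _ _).trans (hB hP)))
      (hF ▸ le_max_left _ _) (hF ▸ max_le (Nat.le_add_right _ _) (Nat.le_add_left _ _))
    exact (hmem (t 1) (hFP.trans (Nat.le_add_right _ _))).ne' hmod
  · obtain ⟨a, haP, hdvd⟩ :=
      exists_lt_dvd_add_mul_add (hp _) (Nat.not_dvd_of_pos_of_lt hr0 hrP) (k P + 1) (t P)
    obtain ⟨F, hFS, hF, hFsum, hFP⟩ :=
      hr.exists_finset_card_eq_sum_modEq hSr (n := k P + 1 + a) (by positivity) P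
    have hmod : ((∑ n ∈ F, n) + t P) % P = 0 :=
      (hFsum.add_right (t P)).trans (Nat.modEq_zero_iff_dvd.2 hdvd)
    have hmem := H P hP F (hFS.trans (Set.sep_subset _ _)) (by omega) (by omega)
    exact Nat.not_lt_zero _ (hmod ▸ hmem (t 1) (hFP.trans (Nat.le_add_right _ _)))

end ResidueAvoidingSet

theorem stmt0 :
    ∀ ε : ℝ, 0 < ε → ∃ A : Set ℕ,
      1 - ε < upperBanachDensity A ∧
      ∀ (k : ℕ → ℕ) (B : ℕ → Set ℕ) (t : ℕ → ℕ),
        (∀ i, B (i + 1) ⊆ B i) → (∀ i, (B i).Infinite) →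
        ¬ (∀ i : ℕ, 1 ≤ i →
            ∀ F : Finset ℕ, ↑F ⊆ B i → k i ≤ F.card → F.card ≤ k i + i →
              (∑ n ∈ F, n) + t i ∈ A) := by
  intro ε hε
  obtain ⟨m, hm⟩ := exists_nat_one_div_lt hε
  choose p hp_ge hp_prime using
    fun j => Nat.exists_infinite_primes ((m + 1) * (j + 1) * 2 ^ (j + 2))
  refine ⟨residueAvoidingSet p, ?_, fun k B t hB hBinf =>
    not_forall_sum_add_mem_residueAvoidingSet hp_prime
      (fun j => lt_of_mul_two_pow_le m.succ_pos (hp_ge j)) (antitone_nat_of_succ_le hB) hBinf k t⟩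
  calc 1 - ε < 1 - 1 / ((m + 1 : ℕ) : ℝ) := by push_cast; linarith
    _ ≤ upperBanachDensity (residueAvoidingSet p) :=
      one_sub_one_div_le_upperBanachDensity_residueAvoidingSet hp_ge m.succ_pos
end

section
/- Let (p_n) be an increasing sequence of primes with ∑ n/p_n < ε, and let A = ℕ \ ⋃_{n≥1} ⋃_{j=0}^{n−1} (p_n ℕ + j). Then the upper Banach density of A is greater than 1 − ε. -/
/-!
The part of `⋃_{j<n} (p_n ℕ + j)` below `L` has at most `n ⌊L / p_n⌋ ≤ L n / p_n` elements,
and it is empty once `n ≥ L` since `p_n ≥ n`. So every initial segment `[0, L)` contains at least `(1 - ∑ n / p_n) L` elements of `A`,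
and since all window ratios are at most `1`, this lower bound survives the `limsup`.
-/

open Filter
open scoped Classical BigOperators

open Finset

lemma window_density_le_one (A : Set ℕ) (M L : ℕ) :
    (#{n ∈ Ico M (M + L) | n ∈ A} : ℝ) / L ≤ 1 := by
  rcases L.eq_zero_or_pos with rfl | hL
  · simp
  rw [div_le_one (by exact_mod_cast hL)]
  exact_mod_cast (card_filter_le _ _).trans (by simp)

lemma le_upperBanachDensity_of_frequently {A : Set ℕ} {c : ℝ}
    (h : ∃ᶠ L in atTop, c ≤ (#{n ∈ range L | n ∈ A} : ℝ) / L) :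
    c ≤ upperBanachDensity A := by
  have hbdd (L : ℕ) : BddAbove (Set.range fun M : ℕ =>
      (#{n ∈ Ico M (M + L) | n ∈ A} : ℝ) / L) :=
    ⟨1, Set.forall_mem_range.2 fun M => window_density_le_one A M L⟩
  refine le_limsup_of_frequently_le (h.mono fun L hL => ?_) ?_
  · refine hL.trans (le_of_eq_of_le ?_ (le_ciSup (hbdd L) 0))
    rw [zero_add, range_eq_Ico]
  · exact isBoundedUnder_of ⟨1, fun L => ciSup_le fun M => window_density_le_one A M L⟩

def shiftedMultiples (p : ℕ → ℕ) : Set ℕ :=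
  {m | ∃ n, 1 ≤ n ∧ ∃ j < n, ∃ q, 1 ≤ q ∧ m = p n * q + j}

lemma card_filter_range_mul_add_le {d : ℕ} (hd : 0 < d) (n L : ℕ) :
    #{m ∈ range L | ∃ j < n, ∃ q, 1 ≤ q ∧ m = d * q + j} ≤ n * (L / d) := by
  have hsub : {m ∈ range L | ∃ j < n, ∃ q, 1 ≤ q ∧ m = d * q + j} ⊆
      (range n ×ˢ Icc 1 (L / d)).image fun jq => d * jq.2 + jq.1 := by
    intro m hm
    simp only [mem_filter, mem_range] at hm
    obtain ⟨hmL, j, hj, q, hq, rfl⟩ := hm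
    have hqL : q ≤ L / d := by
      rw [Nat.le_div_iff_mul_le hd, mul_comm]
      omega
    simp only [mem_image, mem_product, mem_range, mem_Icc, Prod.exists]
    exact ⟨j, q, ⟨hj, hq, hqL⟩, rfl⟩
  calc _ ≤ _ := card_le_card hsub
    _ ≤ #(range n ×ˢ Icc 1 (L / d)) := card_image_le
    _ = n * (L / d) := by simp

lemma card_filter_range_shiftedMultiples_le {p : ℕ → ℕ} (hmono : StrictMono p) (L : ℕ) :
    #{m ∈ range L | m ∈ shiftedMultiples p} ≤ ∑ n ∈ Ico 1 L, n * (L / p n) := by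
  have hsub : {m ∈ range L | m ∈ shiftedMultiples p} ⊆ (Ico 1 L).biUnion
      fun n => {m ∈ range L | ∃ j < n, ∃ q, 1 ≤ q ∧ m = p n * q + j} := by
    intro m hm
    simp only [mem_filter, mem_range] at hm
    obtain ⟨hmL, n, hn, j, hj, q, hq, rfl⟩ := hm
    -- `n ≤ p n ≤ p n * q ≤ m < L`
    have hnL : n < L := by nlinarith [hmono.le_apply (x := n)]
    simp only [mem_biUnion, mem_Ico, mem_filter, mem_range]
    exact ⟨n, ⟨hn, hnL⟩, hmL, j, hj, q, hq, rfl⟩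
  refine (card_le_card hsub).trans (card_biUnion_le.trans (sum_le_sum fun n hn => ?_))
  have hn : 1 ≤ n := (mem_Ico.1 hn).1
  exact card_filter_range_mul_add_le (hn.trans hmono.le_apply) n L

lemma card_filter_range_shiftedMultiples_le_mul_tsum {p : ℕ → ℕ} (hmono : StrictMono p)
    (hsum : Summable fun n : ℕ => (n : ℝ) / p n) (L : ℕ) :
    (#{m ∈ range L | m ∈ shiftedMultiples p} : ℝ) ≤ L * ∑' n : ℕ, (n : ℝ) / p n := by
  calc (#{m ∈ range L | m ∈ shiftedMultiples p} : ℝ)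
      ≤ ((∑ n ∈ Ico 1 L, n * (L / p n) : ℕ) : ℝ) := by
        exact_mod_cast card_filter_range_shiftedMultiples_le hmono L
    _ ≤ ∑ n ∈ Ico 1 L, (L : ℝ) * ((n : ℝ) / p n) := by
        push_cast
        refine sum_le_sum fun n _ => ?_
        rw [mul_div_left_comm]
        gcongr
        exact Nat.cast_div_le
    _ = (L : ℝ) * ∑ n ∈ Ico 1 L, (n : ℝ) / p n := (mul_sum _ _ _).symm
    _ ≤ L * ∑' n : ℕ, (n : ℝ) / p n := by
        gcongr
        exact hsum.sum_le_tsum _ fun n _ => by positivity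

lemma one_sub_tsum_le_density_of_compl_subset {p : ℕ → ℕ} (hmono : StrictMono p)
    (hsum : Summable fun n : ℕ => (n : ℝ) / p n) {A : Set ℕ} (hA : Aᶜ ⊆ shiftedMultiples p)
    {L : ℕ} (hL : 0 < L) :
    1 - ∑' n : ℕ, (n : ℝ) / p n ≤ (#{m ∈ range L | m ∈ A} : ℝ) / L := by
  have hsplit : (#{m ∈ range L | m ∈ A} : ℝ) + #{m ∈ range L | m ∉ A} = L := by
    exact_mod_cast (card_filter_add_card_filter_not _).trans (card_range L)
  have hcompl : (#{m ∈ range L | m ∉ A} : ℝ) ≤ #{m ∈ range L | m ∈ shiftedMultiples p} := by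
    exact_mod_cast card_le_card (monotone_filter_right _ fun m _ hm => hA hm)
  have hbad := card_filter_range_shiftedMultiples_le_mul_tsum hmono hsum L
  rw [le_div_iff₀ (by exact_mod_cast hL)]
  linarith

theorem stmt1_general (ε : ℝ) (p : ℕ → ℕ)
    (hmono : StrictMono p)
    (hsum : Summable (fun n : ℕ => (n : ℝ) / p n))
    (hlt : (∑' n : ℕ, (n : ℝ) / p n) < ε)
    (A : Set ℕ)
    (hA : A = {m : ℕ | ¬ ∃ n, 1 ≤ n ∧ ∃ j < n, ∃ q, 1 ≤ q ∧ m = p n * q + j}) :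
    1 - ε < upperBanachDensity A := by
  have hcompl : Aᶜ ⊆ shiftedMultiples p := fun m hm => by
    rw [hA] at hm
    exact not_not.1 hm
  have hfreq : ∃ᶠ L in atTop,
      1 - ∑' n : ℕ, (n : ℝ) / p n ≤ (#{m ∈ range L | m ∈ A} : ℝ) / L :=
    (eventually_atTop.2 ⟨1, fun L hL =>
      one_sub_tsum_le_density_of_compl_subset hmono hsum hcompl hL⟩).frequently
  exact (sub_lt_sub_left hlt 1).trans_le (le_upperBanachDensity_of_frequently hfreq)

theorem stmt1 (ε : ℝ) (hε : 0 < ε) (p : ℕ → ℕ)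
    (hp : ∀ n, 1 ≤ n → (p n).Prime) (hmono : StrictMono p)
    (hsum : Summable (fun n : ℕ => (n : ℝ) / p n))
    (hlt : (∑' n : ℕ, (n : ℝ) / p n) < ε)
    (A : Set ℕ)
    (hA : A = {m : ℕ | ¬ ∃ n, 1 ≤ n ∧ ∃ j < n, ∃ q, 1 ≤ q ∧ m = p n * q + j}) :
    1 - ε < upperBanachDensity A :=
  stmt1_general ε p hmono hsum hlt A hA
end

section
/- Let X be a compact metric space, T : X → X a homeomorphism, (U_k)_{k∈ℕ} a sequence of open subsets of X, and (x_k)_{k∈ℕ₀} an infinite Erdős progression with x_k ∈ U_k for every k ≥ 1. Then there exists a nested sequence of infinite sets B_1 ⊇ B_2 ⊇ ⋯ ⊆ ℕ such that for every k, every sum ∑_{n∈F} n with F ⊆ B_k and |F| = k belongs to {m ∈ ℕ : T^m x_0 ∈ U_k}. -/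
/-!
Choose b₀ < b₁ < ⋯ among the return times `c n`, together with open neighbourhoods `N m j` of
`x j`, shrinking in `m`, such that `T^[b m]` maps `N (m + 1) j` into `N m (j + 1)` for `j ≤ m`.
For indices `m₁ < ⋯ < m_k`, all `≥ k`, the point `T^[b m_k] x₀` lies in `N m_k 1`; applying
`T^[b m_{k-1}], …, T^[b m₁]` in turn it is moved into `N m₁ k ⊆ N 0 k = U k`.
So `B k = {b m | m ≥ k}` works.
-/

open Filter Set Function Topology

namespace ErdosProgression

variable {X : Type*} {f : X → X}

/-- The constraint `j ≤ m` keeps the condition on `b` finite, so that it can be met by a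
single return time. -/
def refineNhds (f : X → X) (N : ℕ → Set X) (m b j : ℕ) : Set X :=
  if j ≤ m then N j ∩ f^[b] ⁻¹' N (j + 1) else N j

theorem refineNhds_subset (N : ℕ → Set X) (m b j : ℕ) : refineNhds f N m b j ⊆ N j := by
  unfold refineNhds
  split_ifs
  exacts [inter_subset_left, subset_rfl]

theorem mapsTo_refineNhds {N : ℕ → Set X} {m b j : ℕ} (hj : j ≤ m) :
    MapsTo f^[b] (refineNhds f N m b j) (N (j + 1)) := fun _ hy => by
  rw [refineNhds, if_pos hj] at hy
  exact hy.2

theorem mem_refineNhds {x : ℕ → X} {N : ℕ → Set X} {m b : ℕ} (hx : ∀ j, x j ∈ N j)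
    (hb : ∀ j ≤ m, f^[b] (x j) ∈ N (j + 1)) (j : ℕ) : x j ∈ refineNhds f N m b j := by
  unfold refineNhds
  split_ifs with hj
  exacts [⟨hx j, hb j hj⟩, hx j]

theorem antitone_of_eq_refineNhds {b : ℕ → ℕ} {N : ℕ → ℕ → Set X}
    (hN : ∀ m, N (m + 1) = refineNhds f (N m) m (b m)) (j : ℕ) : Antitone (N · j) :=
  antitone_nat_of_succ_le fun m => hN m ▸ refineNhds_subset (N m) m (b m) j

theorem iterate_sum_mem_of_eq_refineNhds {b : ℕ → ℕ} {N : ℕ → ℕ → Set X}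
    (hN : ∀ m, N (m + 1) = refineNhds f (N m) m (b m)) {x₀ : X} (hx₀ : ∀ m, x₀ ∈ N m 0)
    (M : Finset ℕ) : ∀ a, (∀ m ∈ M, a ≤ m) → M.card ≤ a →
      f^[∑ m ∈ M, b m] x₀ ∈ N a M.card := by
  induction M using Finset.induction_on_min with
  | empty => exact fun a _ _ => hx₀ a
  | insert a' s has ih =>
    intro a ha hcard
    have haa' : a ≤ a' := ha a' (s.mem_insert_self a')
    have ha' : a' ∉ s := fun h => (has a' h).false
    rw [Finset.card_insert_of_notMem ha'] at hcard ⊢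
    rw [Finset.sum_insert ha', iterate_add_apply]
    have hs : f^[∑ m ∈ s, b m] x₀ ∈ refineNhds f (N a') a' (b a') s.card :=
      hN a' ▸ ih (a' + 1) has (by omega)
    exact antitone_of_eq_refineNhds hN _ haa' (mapsTo_refineNhds (by omega) hs)

variable [TopologicalSpace X] {x : ℕ → X} {c : ℕ → ℕ}

theorem isOpen_refineNhds (hf : Continuous f) {N : ℕ → Set X} (hN : ∀ j, IsOpen (N j))
    (m b j : ℕ) : IsOpen (refineNhds f N m b j) := by
  unfold refineNhds
  split_ifs
  exacts [(hN j).inter ((hN (j + 1)).preimage (hf.iterate b)), hN j]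

theorem exists_lt_forall_iterate_mem (hc : StrictMono c)
    (hx : ∀ k, Tendsto (fun n => f^[c n] (x k)) atTop (𝓝 (x (k + 1))))
    {N : ℕ → Set X} (hN : ∀ j, IsOpen (N j) ∧ x j ∈ N j) (m B : ℕ) :
    ∃ b, B < b ∧ ∀ j ≤ m, f^[b] (x j) ∈ N (j + 1) := by
  have hlarge : ∀ᶠ n in atTop, B < c n := hc.tendsto_atTop.eventually_gt_atTop B
  have hnear : ∀ᶠ n in atTop, ∀ j ∈ Iic m, f^[c n] (x j) ∈ N (j + 1) :=
    (finite_Iic m).eventually_all.2 fun j _ =>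
      (hx j).eventually ((hN (j + 1)).1.mem_nhds (hN (j + 1)).2)
  obtain ⟨n, hB, hn⟩ := (hlarge.and hnear).exists
  exact ⟨c n, hB, hn⟩

theorem exists_strictMono_eq_refineNhds (hf : Continuous f) (hc : StrictMono c)
    (hx : ∀ k, Tendsto (fun n => f^[c n] (x k)) atTop (𝓝 (x (k + 1))))
    {N₀ : ℕ → Set X} (hN₀ : ∀ j, IsOpen (N₀ j) ∧ x j ∈ N₀ j) :
    ∃ (b : ℕ → ℕ) (N : ℕ → ℕ → Set X), StrictMono b ∧ 0 < b 0 ∧ N 0 = N₀ ∧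
      (∀ m, N (m + 1) = refineNhds f (N m) m (b m)) ∧ ∀ m j, x j ∈ N m j := by
  choose! next hnext_gt hnext_mem using
    fun (m B : ℕ) (N : ℕ → Set X) (hN : ∀ j, IsOpen (N j) ∧ x j ∈ N j) =>
      exists_lt_forall_iterate_mem hc hx hN m B
  -- the state after stage `m` is the pair `(b m, N (m + 1))`
  let step (m : ℕ) (s : ℕ × (ℕ → Set X)) : ℕ × (ℕ → Set X) :=
    (next m s.1 s.2, refineNhds f s.2 m (next m s.1 s.2))
  let g (m : ℕ) : ℕ × (ℕ → Set X) := Nat.rec (0, N₀) step m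
  have hg : ∀ m j, IsOpen ((g m).2 j) ∧ x j ∈ (g m).2 j := by
    intro m
    induction m with
    | zero => exact hN₀
    | succ m ih =>
      exact fun j => ⟨isOpen_refineNhds hf (fun i => (ih i).1) _ _ j,
        mem_refineNhds (fun i => (ih i).2) (hnext_mem _ _ _ ih) j⟩
  exact ⟨fun m => (g (m + 1)).1, fun m => (g m).2,
    strictMono_nat_of_lt_succ fun m => hnext_gt _ _ _ (hg (m + 1)), hnext_gt _ _ _ (hg 0), rfl,
    fun _ => rfl, fun m j => (hg m j).2⟩

end ErdosProgression

open ErdosProgression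

theorem stmt4_general {X : Type} [MetricSpace X] (T : X ≃ₜ X)
    (U : ℕ → Set X) (hU : ∀ k, 1 ≤ k → IsOpen (U k))
    (x : ℕ → X) (c : ℕ → ℕ) (hc : StrictMono c)
    (hEP : ∀ k : ℕ, Filter.Tendsto (fun n => (⇑T)^[c n] (x k))
      Filter.atTop (nhds (x (k + 1))))
    (hx : ∀ k, 1 ≤ k → x k ∈ U k) :
    ∃ B : ℕ → Set ℕ,
      (∀ k, (B k).Infinite) ∧ (∀ k, B (k + 1) ⊆ B k) ∧
      (∀ k, B k ⊆ {n | 1 ≤ n}) ∧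
      ∀ k, 1 ≤ k → ∀ F : Finset ℕ, ↑F ⊆ B k → F.card = k →
        (⇑T)^[∑ n ∈ F, n] (x 0) ∈ U k := by
  -- `x 0` need not lie in `U 0`, hence `univ` at index 0
  have hN₀ : ∀ j, IsOpen (update U 0 univ j) ∧ x j ∈ update U 0 univ j := by
    rintro (_ | j)
    · simp
    · simpa using ⟨hU (j + 1) j.succ_pos, hx (j + 1) j.succ_pos⟩
  obtain ⟨b, N, hb, hb0, hN0, hN, hxN⟩ := exists_strictMono_eq_refineNhds T.continuous hc hEP hN₀
  refine ⟨fun k => b '' Ici k, fun k => (Ici_infinite k).image hb.injective.injOn,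
    fun k => image_mono (Ici_subset_Ici.2 k.le_succ), ?_, ?_⟩
  · rintro k _ ⟨m, -, rfl⟩
    exact hb0.trans_le (hb.monotone m.zero_le)
  · intro k hk F hF hcard
    obtain ⟨M, hM, rfl⟩ := Finset.subset_set_image_iff.1 hF
    rw [Finset.card_image_of_injective _ hb.injective] at hcard
    have hmem := iterate_sum_mem_of_eq_refineNhds hN (fun m => hxN m 0) M k (fun _ hm => hM hm)
      hcard.le
    rw [hcard] at hmem
    simpa [Finset.sum_image hb.injective.injOn, hN0, Nat.one_le_iff_ne_zero.1 hk] using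
      antitone_of_eq_refineNhds hN k k.zero_le hmem

theorem stmt4 {X : Type} [MetricSpace X] [CompactSpace X] (T : X ≃ₜ X)
    (U : ℕ → Set X) (hU : ∀ k, 1 ≤ k → IsOpen (U k))
    (x : ℕ → X) (c : ℕ → ℕ) (hc : StrictMono c)
    (hEP : ∀ k : ℕ, Filter.Tendsto (fun n => (⇑T)^[c n] (x k))
      Filter.atTop (nhds (x (k + 1))))
    (hx : ∀ k, 1 ≤ k → x k ∈ U k) :
    ∃ B : ℕ → Set ℕ,
      (∀ k, (B k).Infinite) ∧ (∀ k, B (k + 1) ⊆ B k) ∧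
      (∀ k, B k ⊆ {n | 1 ≤ n}) ∧
      ∀ k, 1 ≤ k → ∀ F : Finset ℕ, ↑F ⊆ B k → F.card = k →
        (⇑T)^[∑ n ∈ F, n] (x 0) ∈ U k :=
  stmt4_general T U hU x c hc hEP hx
end

section
/- Suppose A ⊆ ℕ has the property that there exist an infinite set B ⊆ ℕ and a sequence (t_k) of natural numbers such that for every k, every sum of exactly k distinct elements of B lies in A − t_k. Then there exists a sequence (B_n) of infinite subsets of ℕ such that B_1 + B_2 + ⋯ + B_k ⊆ A for every k ∈ ℕ. -/
/-! Pass to a subsequence `t (g 1) ≤ t (g 2) ≤ ⋯` of `t`. Split a copy of `ℕ × ℕ` inside `B` into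
disjoint rows and let the `i`-th set consist of a fixed sum of `g i - g (i - 1) - 1` elements of
row `i`, plus one further element of row `i`, plus `t (g i) - t (g (i - 1))` (reading `g 0` and
`t (g 0)` as `0`). A sum
`b₁ + ⋯ + bₖ` with `bᵢ` in the `i`-th set is then a sum of `g k` distinct elements of `B`
plus `t (g k)`, hence lies in `A`. -/

open Finset Function

theorem Set.Infinite.exists_injective_range_subset {α : Type*} {B : Set α} (hB : B.Infinite)
    (ι : Type*) [Countable ι] : ∃ e : ι → α, Injective e ∧ Set.range e ⊆ B := by
  obtain ⟨f, hf⟩ := Countable.exists_injective_nat ι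
  refine ⟨fun i => hB.natEmbedding B (f i),
    Subtype.val_injective.comp ((hB.natEmbedding B).injective.comp hf), ?_⟩
  rintro _ ⟨i, rfl⟩
  exact Subtype.prop _

theorem Finset.sum_Icc_one_tsub {M : Type*} [AddCommMonoid M] [PartialOrder M] [Sub M]
    [OrderedSub M] [AddLeftMono M] [AddLeftReflectLE M] [ExistsAddOfLE M] {f : ℕ → M}
    (hf : Monotone f) (k : ℕ) : ∑ i ∈ Icc 1 k, (f i - f (i - 1)) = f k - f 0 := by
  rw [← Ico_add_one_right_eq_Icc, sum_Ico_eq_sum_range, ← sum_range_tsub hf]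
  simp [add_comm]

theorem exists_sum_Icc_comp_eq_sum_Icc (t : ℕ → ℕ) :
    ∃ s c : ℕ → ℕ, ∀ k, 1 ≤ k → t (∑ i ∈ Icc 1 k, (s i + 1)) = ∑ i ∈ Icc 1 k, c i := by
  obtain ⟨g, hg⟩ := wellQuasiOrdered_le.exists_monotone_subseq t
  -- `g` and `t ∘ g` with their values at `0` replaced by `0`, so that increments telescope.
  set K : ℕ → ℕ := fun k => if k = 0 then 0 else g k
  set T : ℕ → ℕ := fun k => if k = 0 then 0 else t (g k)
  have hK : StrictMono K := strictMono_nat_of_lt_succ fun n => by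
    rcases n with _ | n
    · simpa [K] using (Nat.zero_le _).trans_lt (g.strictMono zero_lt_one)
    · simp [K]
  have hT : Monotone T := monotone_nat_of_le_succ fun n => by
    rcases n with _ | n
    · simp [T]
    · simpa [T] using hg _ _ (Nat.le_succ _)
  refine ⟨fun i => K i - K (i - 1) - 1, fun i => T i - T (i - 1), fun k hk => ?_⟩
  have hsizes : ∑ i ∈ Icc 1 k, (K i - K (i - 1) - 1 + 1) = g k := by
    rw [sum_congr rfl fun i hi => Nat.sub_add_cancel (Nat.sub_pos_of_lt (hK (by grind))),
      sum_Icc_one_tsub hK.monotone]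
    simp [K, Nat.one_le_iff_ne_zero.1 hk]
  rw [hsizes, sum_Icc_one_tsub hT]
  simp [T, Nat.one_le_iff_ne_zero.1 hk]

def blockSet (e : ℕ × ℕ → ℕ) (s c : ℕ → ℕ) (i : ℕ) : Set ℕ :=
  Set.range fun j => ∑ l ∈ range (s i), e (i, l) + e (i, s i + j) + c i

section blockSet

variable {e : ℕ × ℕ → ℕ} (s c : ℕ → ℕ)

theorem blockSet_infinite (he : Injective e) (i : ℕ) : (blockSet e s c i).Infinite :=
  Set.infinite_range_of_injective fun j j' hj => by
    simpa using he (add_left_cancel (add_right_cancel hj))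

theorem exists_finset_sum_eq_of_mem_blockSet (he : Injective e) (I : Finset ℕ) {g : ℕ → ℕ}
    (hg : ∀ i ∈ I, g i ∈ blockSet e s c i) :
    ∃ F : Finset ℕ, ↑F ⊆ Set.range e ∧ F.card = ∑ i ∈ I, (s i + 1) ∧
      ∑ i ∈ I, g i = ∑ n ∈ F, n + ∑ i ∈ I, c i := by
  choose! j hj using hg
  have hnew : ∀ i, s i + j i ∉ range (s i) := by simp
  have hinj : Injective (e ∘ Equiv.sigmaEquivProd ℕ ℕ) := he.comp (Equiv.injective _)
  refine ⟨(I.sigma fun i => insert (s i + j i) (range (s i))).image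
    (e ∘ Equiv.sigmaEquivProd ℕ ℕ), ?_, ?_, ?_⟩
  · rw [coe_image]
    exact (Set.image_subset_range _ _).trans (Set.range_comp_subset_range _ _)
  · rw [card_image_of_injective _ hinj, card_sigma]
    simp [card_insert_of_notMem, hnew]
  · rw [sum_image hinj.injOn, sum_sigma, ← sum_add_distrib]
    refine sum_congr rfl fun i hi => ?_
    rw [← hj i hi, sum_insert (hnew i)]
    simp only [comp_apply, Equiv.sigmaEquivProd_apply]
    ring

end blockSet

theorem stmt6 (A : Set ℕ) (B : Set ℕ) (hB : B.Infinite) (t : ℕ → ℕ)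
    (h : ∀ k, 1 ≤ k → ∀ F : Finset ℕ, ↑F ⊆ B → F.card = k →
      (∑ n ∈ F, n) + t k ∈ A) :
    ∃ Bs : ℕ → Set ℕ, (∀ n, 1 ≤ n → (Bs n).Infinite) ∧
      ∀ k, 1 ≤ k → ∀ g : ℕ → ℕ, (∀ i, 1 ≤ i → i ≤ k → g i ∈ Bs i) →
        (∑ i ∈ Finset.Icc 1 k, g i) ∈ A := by
  obtain ⟨s, c, hsc⟩ := exists_sum_Icc_comp_eq_sum_Icc t
  obtain ⟨e, he, heB⟩ := hB.exists_injective_range_subset (ℕ × ℕ)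
  refine ⟨blockSet e s c, fun n _ => blockSet_infinite s c he n, fun k hk g hg => ?_⟩
  obtain ⟨F, hFe, hcard, hsum⟩ := exists_finset_sum_eq_of_mem_blockSet s c he (Icc 1 k)
    fun i hi => hg i (mem_Icc.1 hi).1 (mem_Icc.1 hi).2
  have hsize : 1 ≤ ∑ i ∈ Icc 1 k, (s i + 1) :=
    (Nat.le_add_left 1 (s 1)).trans
      (single_le_sum (f := fun i => s i + 1) (fun _ _ => Nat.zero_le _) (left_mem_Icc.2 hk))
  rw [hsum, ← hsc k hk]
  exact h _ hsize F (hFe.trans heB) hcard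
end

section
/- Let (X, T) be a topological system, a ∈ X, and σ a Borel probability measure on X^{ℕ₀} whose projection to the 0-th coordinate is δ_a, and which is left-progressive. Suppose E ⊆ X is open and there exists t ∈ ℕ with σ_2(X × T^{−t}E × T^{−t}E) > 0. Then there exist b_1 < b_2 in ℕ with a ∈ T^{−(t + b_1 + b_2)} E, i.e. T^{t + b_1 + b_2} a ∈ E. -/
open MeasureTheory

/-- Left-progressiveness of a measure `σ` on `X^{ℕ₀}`: for each `k ≥ 1` and
open `U_1,…,U_k` with `σ_k(X × U_1 × ⋯ × U_k) > 0`, there are infinitely many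
`n` with `σ_k((X × U_1 × ⋯ × U_k) ∩ T_Δ^{-n}(U_1 × ⋯ × U_k × X)) > 0`. -/
def IsLeftProgressive {X : Type} [MetricSpace X] [CompactSpace X]
    [MeasurableSpace X] (T : X ≃ₜ X) (σ : Measure (ℕ → X)) : Prop :=
  ∀ k : ℕ, 1 ≤ k → ∀ U : ℕ → Set X, (∀ j, IsOpen (U j)) →
    0 < σ {x | ∀ j, 1 ≤ j → j ≤ k → x j ∈ U j} →
    {n : ℕ | 1 ≤ n ∧
      0 < σ ({x | ∀ j, 1 ≤ j → j ≤ k → x j ∈ U j} ∩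
        {x | ∀ j, 1 ≤ j → j ≤ k → (⇑T)^[n] (x (j - 1)) ∈ U j})}.Infinite

/-! Taking `U = T^{-t} E`, left-progressiveness for `(U, U)` gives `b₁ ≥ 1` with
`σ(X × (U ∩ T^{-b₁} U) × U) > 0`; applied again to `(U ∩ T^{-b₁} U, U)` it gives `b₂ > b₁`
with `σ{x | T^{b₂} x₀ ∈ U ∩ T^{-b₁} U} > 0`. Since `x₀ = a` almost surely, `T^{b₁ + b₂} a ∈ U`. -/

theorem mem_of_map_eq_dirac {α β : Type*} [MeasurableSpace α] [MeasurableSpace β]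
    {μ : Measure α} {f : α → β} {b : β} (hf : Measurable f) (hμ : μ.map f = Measure.dirac b)
    {s : Set β} (hs : MeasurableSet s) (hpos : 0 < μ (f ⁻¹' s)) : b ∈ s := by
  rw [← Measure.map_apply hf hs, hμ, Measure.dirac_apply' b hs] at hpos
  by_contra hb
  simp [hb] at hpos

theorem forall_one_le_le_two_iff {P : ℕ → Prop} :
    (∀ j, 1 ≤ j → j ≤ 2 → P j) ↔ P 1 ∧ P 2 := by
  refine ⟨fun h => ⟨h 1 le_rfl one_le_two, h 2 one_le_two le_rfl⟩, fun ⟨h₁, h₂⟩ j hj₁ hj₂ => ?_⟩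
  interval_cases j <;> assumption

namespace IsLeftProgressive

variable {X : Type} [MetricSpace X] [CompactSpace X] [MeasurableSpace X]
  {T : X ≃ₜ X} {σ : Measure (ℕ → X)}

theorem exists_gt_of_two (hLP : IsLeftProgressive T σ) {U₁ U₂ : Set X}
    (hU₁ : IsOpen U₁) (hU₂ : IsOpen U₂) (hpos : 0 < σ {x | x 1 ∈ U₁ ∧ x 2 ∈ U₂}) (m : ℕ) :
    ∃ n, m < n ∧ 0 < σ ({x | x 1 ∈ U₁ ∧ x 2 ∈ U₂} ∩
      {x | (⇑T)^[n] (x 0) ∈ U₁ ∧ (⇑T)^[n] (x 1) ∈ U₂}) := by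
  set U : ℕ → Set X := fun j => if j = 1 then U₁ else U₂
  have hU : ∀ j, IsOpen (U j) := fun j => by
    by_cases hj : j = 1 <;> simp only [U, hj, if_true, if_false] <;> assumption
  have hinf := hLP 2 one_le_two U hU (by simpa [U, forall_one_le_le_two_iff] using hpos)
  obtain ⟨n, ⟨-, hn⟩, hmn⟩ := hinf.exists_gt m
  exact ⟨n, hmn, by simpa [U, forall_one_le_le_two_iff] using hn⟩

end IsLeftProgressive

theorem stmt16 {X : Type} [MetricSpace X] [CompactSpace X]
    [MeasurableSpace X] [BorelSpace X]
    (T : X ≃ₜ X) (a : X) (σ : Measure (ℕ → X)) [IsProbabilityMeasure σ]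
    (h0 : σ.map (fun x => x 0) = Measure.dirac a)
    (hLP : IsLeftProgressive T σ)
    (E : Set X) (hE : IsOpen E) (t : ℕ)
    (ht : 0 < σ {x : ℕ → X | (⇑T)^[t] (x 1) ∈ E ∧ (⇑T)^[t] (x 2) ∈ E}) :
    ∃ b₁ b₂ : ℕ, 1 ≤ b₁ ∧ b₁ < b₂ ∧ (⇑T)^[t + b₁ + b₂] a ∈ E := by
  have hIter : ∀ n, Continuous (⇑T)^[n] := fun n => T.continuous.iterate n
  set U := (⇑T)^[t] ⁻¹' E
  have hU : IsOpen U := hE.preimage (hIter t)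
  obtain ⟨b₁, hb₁, hpos₁⟩ := hLP.exists_gt_of_two hU hU ht 0
  set V := U ∩ (⇑T)^[b₁] ⁻¹' U
  have hV : IsOpen V := hU.inter (hU.preimage (hIter b₁))
  have hposV : 0 < σ {x | x 1 ∈ V ∧ x 2 ∈ U} :=
    hpos₁.trans_le (measure_mono fun x hx => ⟨⟨hx.1.1, hx.2.2⟩, hx.1.2⟩)
  obtain ⟨b₂, hb₁₂, hpos₂⟩ := hLP.exists_gt_of_two hV hU hposV b₁
  have ha : a ∈ (⇑T)^[b₂] ⁻¹' V :=
    mem_of_map_eq_dirac (measurable_pi_apply 0) h0 (hV.preimage (hIter b₂)).measurableSet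
      (hpos₂.trans_le (measure_mono fun x hx => hx.2.1))
  refine ⟨b₁, b₂, hb₁, hb₁₂, ?_⟩
  rw [add_assoc, Function.iterate_add_apply, Function.iterate_add_apply]
  exact ha.2
end
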